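/- arXiv:2208.04985 — 2 statements merged into one kernel-verified Lean document; each statement's English description precedes it below -/
import Mathlib

section
/- For every δ ∈ (0,1), max_{x∈[0,1]} Π^D(x,δ) > Π^D(1,δ) = δ·∫_{θ*}^1 𝒢(ψ(θ)) f(θ) dθ; in particular, the maximum of Π^D(·,δ) over [0,1] is attained only at points x < 1 (the optimal dynamic mechanism strictly outperforms the ex-post optimal mechanism). -/
/-!
Near `x = 1` the dynamic profit exceeds the ex-post one by a first-order term in
`ε = 1 - F(x)`. Since `ψ(θ,x) = ψ(θ) + ε / f(θ)`, the Lipschitz bound on `G` and the convexity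
inequality `𝒢(b) ≥ 𝒢(a) + G(a)(b - a)` make the two `G`-integrals cancel up to `O(ε²)`, and
truncating the ex-post integral at `x` costs at most `𝒢(1) ε`; hence
`Π^D(x,δ) - Π^D(1,δ) ≥ ε (x - μ - δ 𝒢(1) - O(ε))`. Integration by parts gives `μ = 1 - 𝒢(1)`,
so the bracket tends to `(1 - δ) 𝒢(1) > 0` as `x → 1⁻`.
-/

open MeasureTheory

/-- `F(x) = ∫₀^x f`, with the convention that it is `0` for `x ≤ 0`. -/
noncomputable def cdf (f : ℝ → ℝ) (x : ℝ) : ℝ := ∫ t in Set.Ioc (0:ℝ) x, f t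

/-- `𝒢(x) = ∫₀^x G(y) dy`, the left-hand integral of the cdf of `g` (`= 0` for `x ≤ 0`). -/
noncomputable def calG (g : ℝ → ℝ) (x : ℝ) : ℝ := ∫ y in Set.Ioc (0:ℝ) x, cdf g y

/-- `μ = ∫₀¹ ω g(ω) dω`, the mean cost. -/
noncomputable def muG (g : ℝ → ℝ) : ℝ := ∫ t in Set.Ioc (0:ℝ) 1, t * g t

/-- The virtual valuation `ψ(θ) = θ − (1 − F(θ))/f(θ)`. -/
noncomputable def psi (f : ℝ → ℝ) (θ : ℝ) : ℝ := θ - (1 - cdf f θ) / f θ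

/-- The truncated virtual valuation `ψ(θ,x) = θ − (F(x) − F(θ))/f(θ)`. -/
noncomputable def psiT (f : ℝ → ℝ) (x θ : ℝ) : ℝ := θ - (cdf f x - cdf f θ) / f θ

/-- The dynamic-mechanism profit
`Π^D(x,δ) = (1−F(x))·(x − δ·∫_{θ**(x)}^x G(ψ(θ,x)) dθ − μ) + δ·∫_{θ**(x)}^x 𝒢(ψ(θ,x)) f(θ) dθ`
for `x ∈ (0,1]`, with `Π^D(0,δ) = −μ`; here `θss` is the map `x ↦ θ**(x)`. -/
noncomputable def PiD (f g : ℝ → ℝ) (θss : ℝ → ℝ) (x δ : ℝ) : ℝ :=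
  if x = 0 then -(muG g)
  else (1 - cdf f x) * (x - δ * (∫ θ in (θss x)..x, cdf g (psiT f x θ)) - muG g)
    + δ * ∫ θ in (θss x)..x, calG g (psiT f x θ) * f θ

open Set Filter Topology intervalIntegral

lemma MeasureTheory.IntegrableOn.intervalIntegrable_of_mem_Icc {u : ℝ → ℝ} {c d a b : ℝ}
    (hu : IntegrableOn u (Icc c d)) (ha : a ∈ Icc c d) (hb : b ∈ Icc c d) :
    IntervalIntegrable u volume a b :=
  (hu.mono_set (uIcc_subset_Icc ha hb)).intervalIntegrable

lemma ContinuousOn.intervalIntegrable_of_mem_Icc {u : ℝ → ℝ} {c d a b : ℝ}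
    (hu : ContinuousOn u (Icc c d)) (ha : a ∈ Icc c d) (hb : b ∈ Icc c d) :
    IntervalIntegrable u volume a b :=
  hu.integrableOn_Icc.intervalIntegrable_of_mem_Icc ha hb

section Cdf

variable {g h : ℝ → ℝ} {a b x : ℝ}

lemma cdf_of_nonpos (g : ℝ → ℝ) (hx : x ≤ 0) : cdf g x = 0 := by
  simp [cdf, Ioc_eq_empty (not_lt.mpr hx)]

lemma cdf_eq_integral_max_zero (g : ℝ → ℝ) (x : ℝ) : cdf g x = ∫ t in 0..max x 0, g t := by
  rcases le_total x 0 with hx | hx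
  · rw [max_eq_right hx, integral_same, cdf_of_nonpos g hx]
  · rw [max_eq_left hx, integral_of_le hx, cdf]

lemma max_zero_mem_Icc (hx : x ≤ 1) : max x 0 ∈ Icc (0:ℝ) 1 :=
  ⟨le_max_right x 0, max_le hx zero_le_one⟩

lemma cdf_sub_cdf (hg : IntegrableOn g (Icc 0 1)) (ha : a ≤ 1) (hb : b ≤ 1) :
    cdf g b - cdf g a = ∫ t in max a 0..max b 0, g t := by
  have hint : ∀ {y : ℝ}, y ≤ 1 → IntervalIntegrable g volume 0 (max y 0) := fun hy =>
    hg.intervalIntegrable_of_mem_Icc ⟨le_rfl, zero_le_one⟩ (max_zero_mem_Icc hy)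
  rw [cdf_eq_integral_max_zero, cdf_eq_integral_max_zero,
    integral_interval_sub_left (hint hb) (hint ha)]

lemma continuousOn_cdf (hg : IntegrableOn g (Icc 0 1)) : ContinuousOn (cdf g) (Iic 1) := by
  have hprim : ContinuousOn (fun y => ∫ t in 0..y, g t) (Icc 0 1) := by
    simpa only [uIcc_of_le zero_le_one] using
      continuousOn_primitive_interval (a := 0) (b := 1) (by rwa [uIcc_of_le zero_le_one])
  rw [funext (cdf_eq_integral_max_zero g)]
  exact hprim.comp (continuous_id.max continuous_const).continuousOn fun y hy => max_zero_mem_Icc hy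

lemma integrableOn_cdf (hg : IntegrableOn g (Icc 0 1)) : IntegrableOn (cdf g) (Icc 0 1) :=
  ((continuousOn_cdf hg).mono Icc_subset_Iic_self).integrableOn_Icc

lemma cdf_le_cdf (hg : IntegrableOn g (Icc 0 1)) (hg0 : ∀ t ∈ Icc (0:ℝ) 1, 0 ≤ g t)
    (hab : a ≤ b) (hb : b ≤ 1) : cdf g a ≤ cdf g b := by
  rw [← sub_nonneg, cdf_sub_cdf hg (hab.trans hb) hb]
  exact integral_nonneg (max_le_max_right 0 hab) fun t ht =>
    hg0 t ⟨(le_max_right a 0).trans ht.1, ht.2.trans (max_le hb zero_le_one)⟩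

lemma cdf_nonneg (hg : IntegrableOn g (Icc 0 1)) (hg0 : ∀ t ∈ Icc (0:ℝ) 1, 0 ≤ g t)
    (hx : x ≤ 1) : 0 ≤ cdf g x :=
  (cdf_of_nonpos g (min_le_right x 0)).symm.trans_le (cdf_le_cdf hg hg0 (min_le_left x 0) hx)

lemma cdf_lt_cdf (hg : IntegrableOn g (Icc 0 1)) (hpos : ∀ t ∈ Ioo (0:ℝ) 1, 0 < g t)
    (ha : 0 ≤ a) (hab : a < b) (hb : b ≤ 1) : cdf g a < cdf g b := by
  rw [← sub_pos, cdf_sub_cdf hg (hab.le.trans hb) hb, max_eq_left ha,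
    max_eq_left (ha.trans hab.le)]
  exact intervalIntegral_pos_of_pos_on
    (hg.intervalIntegrable_of_mem_Icc ⟨ha, hab.le.trans hb⟩ ⟨ha.trans hab.le, hb⟩)
    (fun t ht => hpos t ⟨ha.trans_lt ht.1, ht.2.trans_le hb⟩) hab

lemma cdf_pos (hg : IntegrableOn g (Icc 0 1)) (hpos : ∀ t ∈ Ioo (0:ℝ) 1, 0 < g t)
    (hx0 : 0 < x) (hx : x ≤ 1) : 0 < cdf g x :=
  cdf_of_nonpos g le_rfl ▸ cdf_lt_cdf hg hpos le_rfl hx0 hx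

lemma cdf_sub_cdf_le (hg : IntegrableOn g (Icc 0 1)) (hg0 : ∀ t ∈ Icc (0:ℝ) 1, 0 ≤ g t) {M : ℝ}
    (hM : ∀ t ∈ Icc (0:ℝ) 1, g t ≤ M) (hab : a ≤ b) (hb : b ≤ 1) :
    cdf g b - cdf g a ≤ M * (b - a) := by
  have hM0 : 0 ≤ M := (hg0 0 ⟨le_rfl, zero_le_one⟩).trans (hM 0 ⟨le_rfl, zero_le_one⟩)
  have hab' : max a 0 ≤ max b 0 := max_le_max_right 0 hab
  have hsub : Icc (max a 0) (max b 0) ⊆ Icc 0 1 :=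
    Icc_subset_Icc (le_max_right a 0) (max_le hb zero_le_one)
  rw [cdf_sub_cdf hg (hab.trans hb) hb]
  calc ∫ t in max a 0..max b 0, g t ≤ ∫ _ in max a 0..max b 0, M :=
        integral_mono_on hab'
          (hg.intervalIntegrable_of_mem_Icc (max_zero_mem_Icc (hab.trans hb)) (max_zero_mem_Icc hb))
          intervalIntegrable_const fun t ht => hM t (hsub ht)
    _ = M * (max b 0 - max a 0) := by rw [intervalIntegral.integral_const, smul_eq_mul, mul_comm]
    _ ≤ M * (b - a) := mul_le_mul_of_nonneg_left ((le_abs_self _).trans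
        ((abs_max_sub_max_le_abs b a 0).trans (abs_of_nonneg (sub_nonneg.2 hab)).le)) hM0

lemma cdf_add_mul_le_cdf (hh : IntegrableOn h (Icc 0 1)) (hmono : MonotoneOn h (Icc 0 1))
    (ha : 0 ≤ a) (hab : a ≤ b) (hb : b ≤ 1) : cdf h a + h a * (b - a) ≤ cdf h b := by
  have hsub : Icc a b ⊆ Icc 0 1 := Icc_subset_Icc ha hb
  have : h a * (b - a) ≤ ∫ t in a..b, h t :=
    calc h a * (b - a) = ∫ _ in a..b, h a := by
          rw [intervalIntegral.integral_const, smul_eq_mul, mul_comm]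
      _ ≤ ∫ t in a..b, h t :=
        integral_mono_on hab intervalIntegrable_const
          (hh.intervalIntegrable_of_mem_Icc ⟨ha, hab.trans hb⟩ ⟨ha.trans hab, hb⟩)
          fun t ht => hmono ⟨ha, hab.trans hb⟩ (hsub ht) ht.1
  have hdiff := cdf_sub_cdf hh (hab.trans hb) hb
  rw [max_eq_left ha, max_eq_left (ha.trans hab)] at hdiff
  linarith

end Cdf

section CalG

variable {g : ℝ → ℝ} {a b x : ℝ}

lemma calG_eq_cdf_cdf (g : ℝ → ℝ) : calG g = cdf (cdf g) := rfl

lemma calG_add_mul_le_calG (hg : IntegrableOn g (Icc 0 1)) (hg0 : ∀ t ∈ Icc (0:ℝ) 1, 0 ≤ g t)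
    (hab : a ≤ b) (hb : b ≤ 1) : calG g a + cdf g a * (b - a) ≤ calG g b := by
  rw [calG_eq_cdf_cdf]
  rcases le_total a 0 with ha | ha
  · rw [cdf_of_nonpos _ ha, cdf_of_nonpos g ha, zero_mul, add_zero]
    exact cdf_nonneg (integrableOn_cdf hg) (fun t ht => cdf_nonneg hg hg0 ht.2) hb
  · exact cdf_add_mul_le_cdf (integrableOn_cdf hg)
      (fun s _ t ht hst => cdf_le_cdf hg hg0 hst ht.2) ha hab hb

lemma hasDerivAt_cdf (hg : ContinuousOn g (Icc 0 1)) (hx : x ∈ Ioo (0:ℝ) 1) :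
    HasDerivAt (cdf g) (g x) x := by
  have hprim : HasDerivAt (fun y => ∫ t in 0..y, g t) (g x) x :=
    integral_hasDerivAt_right
      (hg.intervalIntegrable_of_mem_Icc ⟨le_rfl, zero_le_one⟩ ⟨hx.1.le, hx.2.le⟩)
      ((hg.mono Ioo_subset_Icc_self).stronglyMeasurableAtFilter isOpen_Ioo x hx)
      (hg.continuousAt (Icc_mem_nhds hx.1 hx.2))
  refine hprim.congr_of_eventuallyEq ?_
  filter_upwards [eventually_gt_nhds hx.1] with y hy
  rw [cdf_eq_integral_max_zero, max_eq_left hy.le]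

lemma muG_add_calG_one (hg : ContinuousOn g (Icc 0 1)) (hg_one : cdf g 1 = 1) :
    muG g + calG g 1 = 1 := by
  have hparts := integral_mul_deriv_eq_deriv_mul_of_hasDerivAt (a := 0) (b := 1) (u := id)
    (u' := fun _ => 1) continuousOn_id
    ((continuousOn_cdf hg.integrableOn_Icc).mono (by simp [uIcc_of_le, Icc_subset_Iic_self]))
    (fun y _ => hasDerivAt_id y)
    (fun y hy => hasDerivAt_cdf hg (by simpa using hy))
    intervalIntegrable_const
    (hg.intervalIntegrable_of_mem_Icc ⟨le_rfl, zero_le_one⟩ ⟨zero_le_one, le_rfl⟩)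
  simp only [id, one_mul, zero_mul, hg_one, sub_zero] at hparts
  rw [muG, calG, ← integral_of_le zero_le_one, ← integral_of_le zero_le_one, hparts]
  ring

end CalG

structure IsContPosDensity (f : ℝ → ℝ) : Prop where
  continuousOn : ContinuousOn f (Icc 0 1)
  pos : ∀ t ∈ Icc (0:ℝ) 1, 0 < f t
  cdf_one : cdf f 1 = 1

lemma psiT_one {f : ℝ → ℝ} (hf_one : cdf f 1 = 1) : psiT f 1 = psi f := by
  ext θ
  rw [psiT, psi, hf_one]

lemma psiT_eq_psi_add (f : ℝ → ℝ) (x θ : ℝ) : psiT f x θ = psi f θ + (1 - cdf f x) / f θ := by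
  rw [psiT, psi]
  ring

namespace IsContPosDensity

variable {f : ℝ → ℝ} (hf : IsContPosDensity f) {x θ : ℝ}
include hf

lemma integrableOn : IntegrableOn f (Icc 0 1) := hf.continuousOn.integrableOn_Icc

lemma nonneg : ∀ t ∈ Icc (0:ℝ) 1, 0 ≤ f t := fun t ht => (hf.pos t ht).le

lemma cdf_le_one (hx : x ≤ 1) : cdf f x ≤ 1 :=
  hf.cdf_one ▸ cdf_le_cdf hf.integrableOn hf.nonneg hx le_rfl

lemma cdf_lt_one (hx0 : 0 ≤ x) (hx : x < 1) : cdf f x < 1 :=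
  hf.cdf_one ▸ cdf_lt_cdf hf.integrableOn (fun t ht => hf.pos t (Ioo_subset_Icc_self ht))
    hx0 hx le_rfl

lemma calG_one_pos : 0 < calG f 1 :=
  cdf_pos (integrableOn_cdf hf.integrableOn)
    (fun _ ht => cdf_pos hf.integrableOn (fun s hs => hf.pos s (Ioo_subset_Icc_self hs))
      ht.1 ht.2.le)
    one_pos le_rfl

lemma psi_le_psiT (hx : x ≤ 1) (hθ : θ ∈ Icc (0:ℝ) 1) : psi f θ ≤ psiT f x θ := by
  rw [psiT_eq_psi_add]
  have := div_nonneg (sub_nonneg.2 (hf.cdf_le_one hx)) (hf.pos θ hθ).le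
  linarith

lemma psiT_le_one (hx : x ≤ 1) (hθ : θ ∈ Icc 0 x) : psiT f x θ ≤ 1 := by
  have hF := cdf_le_cdf hf.integrableOn hf.nonneg hθ.2 hx
  have := div_nonneg (sub_nonneg.2 hF) (hf.pos θ ⟨hθ.1, hθ.2.trans hx⟩).le
  rw [psiT]
  linarith [hθ.2]

lemma psi_le_one (hθ : θ ∈ Icc (0:ℝ) 1) : psi f θ ≤ 1 :=
  psiT_one hf.cdf_one ▸ hf.psiT_le_one le_rfl hθ

lemma continuousOn_psiT (x : ℝ) : ContinuousOn (psiT f x) (Icc 0 1) :=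
  continuousOn_id.sub ((continuousOn_const.sub
    ((continuousOn_cdf hf.integrableOn).mono Icc_subset_Iic_self)).div hf.continuousOn
      fun t ht => (hf.pos t ht).ne')

lemma continuousOn_comp_psiT {u : ℝ → ℝ} (hu : ContinuousOn u (Iic 1)) (hx : x ≤ 1) :
    ContinuousOn (fun θ => u (psiT f x θ)) (Icc 0 x) :=
  hu.comp ((hf.continuousOn_psiT x).mono (Icc_subset_Icc le_rfl hx))
    fun _ hθ => hf.psiT_le_one hx hθ

lemma continuousOn_comp_psi {u : ℝ → ℝ} (hu : ContinuousOn u (Iic 1)) :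
    ContinuousOn (fun θ => u (psi f θ)) (Icc 0 1) :=
  psiT_one hf.cdf_one ▸ hf.continuousOn_comp_psiT hu le_rfl

lemma le_of_psiT_eq_zero (hpsi_mono : StrictMonoOn (psi f) (Icc 0 1)) {θs : ℝ}
    (hθs : θs ∈ Icc (0:ℝ) 1) (hθs0 : psi f θs = 0) (hx : x ≤ 1) (hθ : θ ∈ Icc 0 x)
    (h0 : psiT f x θ = 0) : θ ≤ θs := by
  have hθ1 : θ ∈ Icc (0:ℝ) 1 := ⟨hθ.1, hθ.2.trans hx⟩
  refine (hpsi_mono.le_iff_le hθ1 hθs).1 ?_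
  rw [hθs0, ← h0]
  exact hf.psi_le_psiT hx hθ1

end IsContPosDensity

section Integrals

variable {f g : ℝ → ℝ} {t x : ℝ}

lemma integral_cdf_psiT_le (hf : IsContPosDensity f) (hg : IntegrableOn g (Icc 0 1))
    (hg0 : ∀ s ∈ Icc (0:ℝ) 1, 0 ≤ g s) {m M : ℝ} (hm0 : 0 < m) (hm : ∀ s ∈ Icc (0:ℝ) 1, m ≤ f s)
    (hM : ∀ s ∈ Icc (0:ℝ) 1, g s ≤ M) (ht : 0 ≤ t) (htx : t ≤ x) (hx : x ≤ 1) :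
    ∫ θ in t..x, cdf g (psiT f x θ) ≤ (∫ θ in t..x, cdf g (psi f θ)) + M * (1 - cdf f x) / m := by
  set ε := 1 - cdf f x
  have hε : 0 ≤ ε := sub_nonneg.2 (hf.cdf_le_one hx)
  have hM0 : 0 ≤ M := (hg0 0 ⟨le_rfl, zero_le_one⟩).trans (hM 0 ⟨le_rfl, zero_le_one⟩)
  have hpoint : ∀ θ ∈ Icc t x, cdf g (psiT f x θ) ≤ cdf g (psi f θ) + M * ε / m := by
    intro θ hθ
    have hθ1 : θ ∈ Icc (0:ℝ) 1 := ⟨ht.trans hθ.1, hθ.2.trans hx⟩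
    have hlip := cdf_sub_cdf_le hg hg0 hM (hf.psi_le_psiT hx hθ1)
      (hf.psiT_le_one hx ⟨hθ1.1, hθ.2⟩)
    have hdiv : M * (ε / f θ) ≤ M * (ε / m) := by
      gcongr
      exact hm θ hθ1
    rw [psiT_eq_psi_add, add_sub_cancel_left] at hlip
    rw [psiT_eq_psi_add, mul_div_assoc]
    linarith
  have hGψ := (hf.continuousOn_comp_psi (continuousOn_cdf hg)).intervalIntegrable_of_mem_Icc
    ⟨ht, htx.trans hx⟩ ⟨ht.trans htx, hx⟩
  have hGψT := (hf.continuousOn_comp_psiT (continuousOn_cdf hg) hx).intervalIntegrable_of_mem_Icc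
    ⟨ht, htx⟩ ⟨ht.trans htx, le_rfl⟩
  calc ∫ θ in t..x, cdf g (psiT f x θ)
      ≤ ∫ θ in t..x, (cdf g (psi f θ) + M * ε / m) :=
        integral_mono_on htx hGψT (hGψ.add intervalIntegrable_const) hpoint
    _ = (∫ θ in t..x, cdf g (psi f θ)) + (x - t) * (M * ε / m) := by
        rw [integral_add hGψ intervalIntegrable_const, intervalIntegral.integral_const,
          smul_eq_mul]
    _ ≤ (∫ θ in t..x, cdf g (psi f θ)) + M * ε / m := by
        have : 0 ≤ M * ε / m := by positivity
        nlinarith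

lemma integral_calG_psi_add_le (hf : IsContPosDensity f) (hg : IntegrableOn g (Icc 0 1))
    (hg0 : ∀ s ∈ Icc (0:ℝ) 1, 0 ≤ g s) (ht : 0 ≤ t) (htx : t ≤ x) (hx : x ≤ 1) :
    (∫ θ in t..x, calG g (psi f θ) * f θ) + (1 - cdf f x) * ∫ θ in t..x, cdf g (psi f θ)
      ≤ ∫ θ in t..x, calG g (psiT f x θ) * f θ := by
  have hpoint : ∀ θ ∈ Icc t x, calG g (psi f θ) * f θ + (1 - cdf f x) * cdf g (psi f θ)
      ≤ calG g (psiT f x θ) * f θ := by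
    intro θ hθ
    have hθ1 : θ ∈ Icc (0:ℝ) 1 := ⟨ht.trans hθ.1, hθ.2.trans hx⟩
    have hconv := calG_add_mul_le_calG hg hg0 (hf.psi_le_psiT hx hθ1)
      (hf.psiT_le_one hx ⟨hθ1.1, hθ.2⟩)
    rw [psiT_eq_psi_add, add_sub_cancel_left] at hconv
    have hfθ := hf.pos θ hθ1
    rw [psiT_eq_psi_add]
    calc calG g (psi f θ) * f θ + (1 - cdf f x) * cdf g (psi f θ)
        = (calG g (psi f θ) + cdf g (psi f θ) * ((1 - cdf f x) / f θ)) * f θ := by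
          field_simp
      _ ≤ _ := by gcongr
  have hGψ := (hf.continuousOn_comp_psi (continuousOn_cdf hg)).intervalIntegrable_of_mem_Icc
    ⟨ht, htx.trans hx⟩ ⟨ht.trans htx, hx⟩
  have h𝒢ψ : IntervalIntegrable (fun θ => calG g (psi f θ) * f θ) volume t x :=
    ((hf.continuousOn_comp_psi (continuousOn_cdf (integrableOn_cdf hg))).mul
    hf.continuousOn).intervalIntegrable_of_mem_Icc ⟨ht, htx.trans hx⟩ ⟨ht.trans htx, hx⟩
  have h𝒢ψT : IntervalIntegrable (fun θ => calG g (psiT f x θ) * f θ) volume t x :=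
    ((hf.continuousOn_comp_psiT (continuousOn_cdf (integrableOn_cdf hg)) hx).mul
    (hf.continuousOn.mono (Icc_subset_Icc le_rfl hx))).intervalIntegrable_of_mem_Icc
    ⟨ht, htx⟩ ⟨ht.trans htx, le_rfl⟩
  rw [← intervalIntegral.integral_const_mul, ← integral_add h𝒢ψ (hGψ.const_mul _)]
  exact integral_mono_on htx (h𝒢ψ.add (hGψ.const_mul _)) h𝒢ψT hpoint

lemma integral_calG_psi_le (hf : IsContPosDensity f) (hg : IntegrableOn g (Icc 0 1))
    (hg0 : ∀ s ∈ Icc (0:ℝ) 1, 0 ≤ g s) (hpsi_mono : StrictMonoOn (psi f) (Icc 0 1)) {θs : ℝ}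
    (hθs : θs ∈ Icc (0:ℝ) 1) (hθs0 : psi f θs = 0) (ht : 0 ≤ t) (htθs : t ≤ θs) (htx : t ≤ x)
    (hx : x ≤ 1) :
    ∫ θ in θs..1, calG g (psi f θ) * f θ
      ≤ (∫ θ in t..x, calG g (psi f θ) * f θ) + calG g 1 * (1 - cdf f x) := by
  have hG_int := integrableOn_cdf hg
  have hint : ∀ {a b : ℝ}, a ∈ Icc (0:ℝ) 1 → b ∈ Icc (0:ℝ) 1 →
      IntervalIntegrable (fun θ => calG g (psi f θ) * f θ) volume a b := fun ha hb =>
    ((hf.continuousOn_comp_psi (continuousOn_cdf hG_int)).mul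
      hf.continuousOn).intervalIntegrable_of_mem_Icc ha hb
  have ht1 : t ∈ Icc (0:ℝ) 1 := ⟨ht, htθs.trans hθs.2⟩
  have hx1 : x ∈ Icc (0:ℝ) 1 := ⟨ht.trans htx, hx⟩
  have h1 : (1:ℝ) ∈ Icc (0:ℝ) 1 := right_mem_Icc.2 zero_le_one
  have hzero : ∫ θ in t..θs, calG g (psi f θ) * f θ = 0 := by
    refine (integral_congr fun θ hθ => ?_).trans integral_zero
    rw [uIcc_of_le htθs] at hθ
    have hψ : psi f θ ≤ 0 :=
      hθs0 ▸ hpsi_mono.monotoneOn ⟨ht.trans hθ.1, hθ.2.trans hθs.2⟩ hθs hθ.2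
    simp only [calG_eq_cdf_cdf, cdf_of_nonpos _ hψ, zero_mul]
  have hF : ∫ θ in x..1, f θ = 1 - cdf f x := by
    have h := cdf_sub_cdf hf.integrableOn hx le_rfl
    rw [hf.cdf_one, max_eq_left hx1.1, max_eq_left zero_le_one] at h
    exact h.symm
  have htail : ∫ θ in x..1, calG g (psi f θ) * f θ ≤ calG g 1 * (1 - cdf f x) :=
    calc ∫ θ in x..1, calG g (psi f θ) * f θ ≤ ∫ θ in x..1, calG g 1 * f θ :=
          integral_mono_on hx (hint hx1 h1)
            ((hf.continuousOn.intervalIntegrable_of_mem_Icc hx1 h1).const_mul _)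
            fun θ hθ => mul_le_mul_of_nonneg_right
              (cdf_le_cdf hG_int (fun s hs => cdf_nonneg hg hg0 hs.2)
                (hf.psi_le_one ⟨hx1.1.trans hθ.1, hθ.2⟩) le_rfl)
              (hf.nonneg θ ⟨hx1.1.trans hθ.1, hθ.2⟩)
      _ = calG g 1 * (1 - cdf f x) := by rw [intervalIntegral.integral_const_mul, hF]
  have hsplit₁ := integral_add_adjacent_intervals (hint ht1 hθs) (hint hθs h1)
  have hsplit₂ := integral_add_adjacent_intervals (hint ht1 hx1) (hint hx1 h1)
  linarith

end Integrals

lemma PiD_one {f : ℝ → ℝ} (hf_one : cdf f 1 = 1) (g θss : ℝ → ℝ) (δ : ℝ) :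
    PiD f g θss 1 δ = δ * ∫ θ in θss 1..1, calG g (psi f θ) * f θ := by
  rw [PiD, if_neg one_ne_zero, psiT_one hf_one, hf_one]
  ring

theorem PiD_one_add_le_PiD {f g θss : ℝ → ℝ} (hf : IsContPosDensity f)
    (hg : IntegrableOn g (Icc 0 1)) (hg0 : ∀ s ∈ Icc (0:ℝ) 1, 0 ≤ g s)
    (hpsi_mono : StrictMonoOn (psi f) (Icc 0 1))
    (hθss : ∀ x ∈ Ioc (0:ℝ) 1, θss x ∈ Icc 0 x ∧ psiT f x (θss x) = 0)
    {m M δ x : ℝ} (hm0 : 0 < m) (hm : ∀ s ∈ Icc (0:ℝ) 1, m ≤ f s)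
    (hM : ∀ s ∈ Icc (0:ℝ) 1, g s ≤ M) (hδ : 0 ≤ δ) (hx : x ∈ Ioo (0:ℝ) 1) :
    PiD f g θss 1 δ + (1 - cdf f x) * (x - muG g - δ * calG g 1 - δ * (M * (1 - cdf f x) / m))
      ≤ PiD f g θss x δ := by
  obtain ⟨hθss₁, hθss₁_zero⟩ := hθss 1 ⟨zero_lt_one, le_rfl⟩
  obtain ⟨hθssₓ, hθssₓ_zero⟩ := hθss x ⟨hx.1, hx.2.le⟩
  rw [psiT_one hf.cdf_one] at hθss₁_zero
  have hle : θss x ≤ θss 1 :=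
    hf.le_of_psiT_eq_zero hpsi_mono hθss₁ hθss₁_zero hx.2.le hθssₓ hθssₓ_zero
  have hJ := integral_cdf_psiT_le hf hg hg0 hm0 hm hM hθssₓ.1 hθssₓ.2 hx.2.le
  have hK := integral_calG_psi_add_le hf hg hg0 hθssₓ.1 hθssₓ.2 hx.2.le
  have hT :=
    integral_calG_psi_le hf hg hg0 hpsi_mono hθss₁ hθss₁_zero hθssₓ.1 hle hθssₓ.2 hx.2.le
  have hε : 0 ≤ 1 - cdf f x := sub_nonneg.2 (hf.cdf_le_one hx.2.le)
  rw [PiD_one hf.cdf_one, PiD, if_neg hx.1.ne']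
  nlinarith [mul_le_mul_of_nonneg_left hJ (mul_nonneg hε hδ), mul_le_mul_of_nonneg_left hK hδ,
    mul_le_mul_of_nonneg_left hT hδ]

theorem exists_PiD_gt_PiD_one {f g θss : ℝ → ℝ} (hf : IsContPosDensity f)
    (hg : IsContPosDensity g) (hpsi_mono : StrictMonoOn (psi f) (Icc 0 1))
    (hθss : ∀ x ∈ Ioc (0:ℝ) 1, θss x ∈ Icc 0 x ∧ psiT f x (θss x) = 0)
    {δ : ℝ} (hδ : δ ∈ Ioo (0:ℝ) 1) :
    ∃ x ∈ Icc (0:ℝ) 1, PiD f g θss 1 δ < PiD f g θss x δ := by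
  obtain ⟨a, ha, hmin⟩ :=
    isCompact_Icc.exists_isMinOn (nonempty_Icc.2 zero_le_one) hf.continuousOn
  obtain ⟨b, -, hmax⟩ :=
    isCompact_Icc.exists_isMaxOn (nonempty_Icc.2 zero_le_one) hg.continuousOn
  set gap : ℝ → ℝ := fun x => x - muG g - δ * calG g 1 - δ * (g b * (1 - cdf f x) / f a)
  have hgap₁ : gap 1 = (1 - δ) * calG g 1 := by
    simp only [gap, hf.cdf_one, sub_self, mul_zero, zero_div]
    linarith [muG_add_calG_one hg.continuousOn hg.cdf_one]
  have hcont : ContinuousWithinAt gap (Iio 1) 1 := by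
    have hF : ContinuousWithinAt (cdf f) (Iio 1) 1 :=
      (continuousOn_cdf hf.integrableOn 1 self_mem_Iic).mono Iio_subset_Iic_self
    fun_prop
  have hpos : 0 < gap 1 := hgap₁ ▸ mul_pos (sub_pos.2 hδ.2) hg.calG_one_pos
  have hnear : ∀ᶠ x in 𝓝[<] (1:ℝ), x ∈ Ioo 0 1 := Ioo_mem_nhdsLT zero_lt_one
  obtain ⟨x, hx, hgap⟩ := (hnear.and (hcont.eventually (lt_mem_nhds hpos))).exists
  have hε : 0 < 1 - cdf f x := sub_pos.2 (hf.cdf_lt_one hx.1.le hx.2)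
  refine ⟨x, Ioo_subset_Icc_self hx, ?_⟩
  linarith [PiD_one_add_le_PiD hf hg.integrableOn hg.nonneg hpsi_mono hθss (hf.pos a ha)
    (fun s hs => hmin hs) (fun s hs => hmax hs) hδ.1.le hx, mul_pos hε hgap]

theorem stmt1_general
    (f g : ℝ → ℝ)
    (hf_one : cdf f 1 = 1)
    (hg_one : cdf g 1 = 1)
    (hg_cont : ContinuousOn g (Set.Icc 0 1))
    (hg_pos : ∀ t ∈ Set.Icc (0:ℝ) 1, 0 < g t)
    (hf_pos : ∀ t ∈ Set.Icc (0:ℝ) 1, 0 < f t)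
    (fd : ℝ → ℝ)
    (hf_deriv : ∀ t ∈ Set.Icc (0:ℝ) 1, HasDerivWithinAt f (fd t) (Set.Icc 0 1) t)
    (hpsi_mono : StrictMonoOn (psi f) (Set.Icc 0 1))
    (θs : ℝ) (hθs : θs ∈ Set.Ioo (0:ℝ) 1) (hθs0 : psi f θs = 0)
    (θss : ℝ → ℝ)
    (hθss : ∀ x ∈ Set.Ioc (0:ℝ) 1, θss x ∈ Set.Ioo 0 x ∧ psiT f x (θss x) = 0)
    : ∀ δ ∈ Set.Ioo (0:ℝ) 1,
      PiD f g θss 1 δ = δ * (∫ θ in θs..1, calG g (psi f θ) * f θ) ∧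
      ∀ m : ℝ, IsGreatest ((fun x => PiD f g θss x δ) '' Set.Icc (0:ℝ) 1) m →
        PiD f g θss 1 δ < m ∧
        ∀ x ∈ Set.Icc (0:ℝ) 1, PiD f g θss x δ = m → x < 1 := by
  have hf : IsContPosDensity f :=
    ⟨fun t ht => (hf_deriv t ht).continuousWithinAt, hf_pos, hf_one⟩
  have hg : IsContPosDensity g := ⟨hg_cont, hg_pos, hg_one⟩
  have hθss' : ∀ x ∈ Ioc (0:ℝ) 1, θss x ∈ Icc 0 x ∧ psiT f x (θss x) = 0 :=
    fun x hx => ⟨Ioo_subset_Icc_self (hθss x hx).1, (hθss x hx).2⟩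
  have hθss₁ : θss 1 = θs :=
    hpsi_mono.injOn (hθss' 1 ⟨one_pos, le_rfl⟩).1 (Ioo_subset_Icc_self hθs)
      (by rw [hθs0, ← psiT_one hf_one]; exact (hθss 1 ⟨one_pos, le_rfl⟩).2)
  intro δ hδ
  refine ⟨by rw [PiD_one hf_one, hθss₁], fun m hm => ?_⟩
  obtain ⟨x, hx, hlt⟩ := exists_PiD_gt_PiD_one hf hg hpsi_mono hθss' hδ
  have hlt_m : PiD f g θss 1 δ < m := hlt.trans_le (hm.2 ⟨x, hx, rfl⟩)
  exact ⟨hlt_m, fun y hy hym => lt_of_le_of_ne hy.2 (by rintro rfl; exact hlt_m.ne hym)⟩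

/-- for every discount factor in (0,1) the maximum of the dynamic-mechanism
profit over [0,1] strictly exceeds its value at x = 1, which equals the (discounted)
ex-post optimal profit; any maximizer lies strictly below 1. -/
theorem stmt1
    (f g : ℝ → ℝ)
    (hf_int : IntegrableOn f (Set.Icc 0 1))
    (hg_int : IntegrableOn g (Set.Icc 0 1))
    (hf_ae : ∀ᵐ t, t ∈ Set.Icc (0:ℝ) 1 → 0 < f t)
    (hg_ae : ∀ᵐ t, t ∈ Set.Icc (0:ℝ) 1 → 0 < g t)
    (hf_one : cdf f 1 = 1)
    (hg_one : cdf g 1 = 1)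
    (hg_cont : ContinuousOn g (Set.Icc 0 1))
    (hg_pos : ∀ t ∈ Set.Icc (0:ℝ) 1, 0 < g t)
    (hf_pos : ∀ t ∈ Set.Icc (0:ℝ) 1, 0 < f t)
    (fd : ℝ → ℝ) (hfd_cont : ContinuousOn fd (Set.Icc 0 1))
    (hf_deriv : ∀ t ∈ Set.Icc (0:ℝ) 1, HasDerivWithinAt f (fd t) (Set.Icc 0 1) t)
    (hpsi_mono : StrictMonoOn (psi f) (Set.Icc 0 1))
    (hpsiT_deriv : ∀ x ∈ Set.Ioc (0:ℝ) 1, ∃ d : ℝ → ℝ, ContinuousOn d (Set.Icc 0 x) ∧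
      ∀ θ ∈ Set.Icc (0:ℝ) x, 0 < d θ ∧ HasDerivWithinAt (psiT f x) (d θ) (Set.Icc 0 x) θ)
    (θs : ℝ) (hθs : θs ∈ Set.Ioo (0:ℝ) 1) (hθs0 : psi f θs = 0)
    (θss : ℝ → ℝ)
    (hθss : ∀ x ∈ Set.Ioc (0:ℝ) 1, θss x ∈ Set.Ioo 0 x ∧ psiT f x (θss x) = 0)
    : ∀ δ ∈ Set.Ioo (0:ℝ) 1,
      PiD f g θss 1 δ = δ * (∫ θ in θs..1, calG g (psi f θ) * f θ) ∧
      ∀ m : ℝ, IsGreatest ((fun x => PiD f g θss x δ) '' Set.Icc (0:ℝ) 1) m →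
        PiD f g θss 1 δ < m ∧
        ∀ x ∈ Set.Icc (0:ℝ) 1, PiD f g θss x δ = m → x < 1 :=
  stmt1_general f g hf_one hg_one hg_cont hg_pos hf_pos fd hf_deriv hpsi_mono θs hθs hθs0 θss hθss
end

section
/- Let A := ∫_{θ*}^1 𝒢(ψ(θ)) f(θ) dθ, π^EAO := max_{p∈[0,1]} (1−F(p))·𝒢(p), and π^EAFP := max_{p∈[0,1]} (1−F(p))·(p−μ). Then 0 < π^EAFP < π^EAO < A, and setting δ̄ := π^EAO/A ∈ (0,1) and δ* := π^EAFP/A, one has δ* < δ̄, δ·A > π^EAO for every δ ∈ (δ̄,1), and δ·A < π^EAO for every δ ∈ (0,δ̄). -/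
open MeasureTheory

/-!
`𝒢` is convex with derivative `G`, so `𝒢(ψ(θ)) ≥ 𝒢(θ) - G(θ)(θ - ψ(θ))`, strictly when
`0 ≤ ψ(θ) < θ`, in particular for `θ ∈ (θ*, 1)`. Multiplying by `f(θ)` and using
`f(θ)(θ - ψ(θ)) = 1 - F(θ)`, the right-hand side becomes `-((1 - F)𝒢)'(θ)`; integrating over
`[p, 1]` gives `(1 - F(p))𝒢(p) < ∫_p^1 𝒢(ψ)f ≤ A`, as `𝒢 ∘ ψ ≥ 0` vanishes below `θ*`.
Integration by parts gives `𝒢(1) = 1 - μ`, and the strict tangent inequality at `1` then gives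
`𝒢(p) > p - μ` for `p < 1`: at every price, the fixed-price profit is below the at-will profit.
-/

open Set intervalIntegral

section Primitive

variable {φ u : ℝ → ℝ} {a b c d : ℝ}

theorem intervalIntegral_pos_of_ae_pos (hab : a < b) (hφ : IntervalIntegrable φ volume a b)
    (hpos : ∀ᵐ t, t ∈ Ioc a b → 0 < φ t) : 0 < ∫ t in a..b, φ t := by
  have hpos' : ∀ᵐ t ∂volume.restrict (Ioc a b), 0 < φ t :=
    (ae_restrict_iff' measurableSet_Ioc).2 hpos
  have h := integral_lt_integral_of_ae_le_of_measure_setOfPred_lt_ne_zero hab.le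
    intervalIntegrable_const hφ (hpos'.mono fun t ht => ht.le) ?_
  · simpa using h
  have hfull : {t | 0 < φ t} =ᵐ[volume.restrict (Ioc a b)] univ := ae_eq_univ.2 (ae_iff.1 hpos')
  rw [measure_congr hfull, Measure.restrict_apply_univ]
  simp [hab]

theorem integral_lt_integral_of_le_of_lt_on_Ioo {f g : ℝ → ℝ}
    (hfi : IntervalIntegrable f volume a b) (hgi : IntervalIntegrable g volume a b)
    (hle : ∀ x ∈ Ioc a b, f x ≤ g x) (hac : a ≤ c) (hcd : c < d) (hdb : d ≤ b)
    (hlt : ∀ x ∈ Ioo c d, f x < g x) : ∫ x in a..b, f x < ∫ x in a..b, g x := by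
  refine integral_lt_integral_of_ae_le_of_measure_setOfPred_lt_ne_zero
    (hac.trans (hcd.le.trans hdb)) hfi hgi
    ((ae_restrict_iff' measurableSet_Ioc).2 (ae_of_all _ hle)) (ne_of_gt ?_)
  calc (0 : ENNReal) < volume (Ioo c d) := by simp [hcd]
    _ = volume (Ioo c d ∩ Ioc a b) := by
      rw [inter_eq_left.2 (Ioo_subset_Ioc_self.trans (Ioc_subset_Ioc hac hdb))]
    _ ≤ volume.restrict (Ioc a b) (Ioo c d) := Measure.le_restrict_apply _ _
    _ ≤ _ := measure_mono hlt

theorem MeasureTheory.LocallyIntegrable.intervalIntegrable (hφ : LocallyIntegrable φ) (a b : ℝ) :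
    IntervalIntegrable φ volume a b :=
  (hφ.integrableOn_isCompact isCompact_uIcc).intervalIntegrable

theorem monotone_primitive (hφ : LocallyIntegrable φ) (h0 : 0 ≤ᵐ[volume] φ) (c : ℝ) :
    Monotone fun x => ∫ t in c..x, φ t := fun x y hxy => by
  dsimp only
  rw [← sub_nonneg, integral_interval_sub_left (hφ.intervalIntegrable _ _)
    (hφ.intervalIntegrable _ _)]
  exact integral_nonneg_of_ae hxy h0

theorem strictMonoOn_primitive (hφ : LocallyIntegrable φ) (hpos : ∀ᵐ t, t ∈ Ioc a b → 0 < φ t)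
    (c : ℝ) : StrictMonoOn (fun x => ∫ t in c..x, φ t) (Icc a b) := fun x hx y hy hxy => by
  dsimp only
  rw [← sub_pos, integral_interval_sub_left (hφ.intervalIntegrable _ _)
    (hφ.intervalIntegrable _ _)]
  exact intervalIntegral_pos_of_ae_pos hxy (hφ.intervalIntegrable _ _)
    (hpos.mono fun t ht hty => ht ⟨hx.1.trans_lt hty.1, hty.2.trans hy.2⟩)

theorem integral_le_mul_sub_of_monotoneOn (hab : a ≤ b) (hu : MonotoneOn u (Icc a b)) :
    ∫ x in a..b, u x ≤ u b * (b - a) := by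
  have hint : IntervalIntegrable u volume a b := (uIcc_of_le hab ▸ hu).intervalIntegrable
  calc ∫ x in a..b, u x ≤ ∫ _ in a..b, u b :=
        integral_mono_on hab hint intervalIntegrable_const
          fun x hx => hu hx (right_mem_Icc.2 hab) hx.2
    _ = u b * (b - a) := by rw [intervalIntegral.integral_const, smul_eq_mul, mul_comm]

theorem integral_lt_mul_sub_of_strictMonoOn (hab : a < b) (hu : StrictMonoOn u (Icc a b)) :
    ∫ x in a..b, u x < u b * (b - a) := by
  have hint : IntervalIntegrable u volume a b :=
    (uIcc_of_le hab.le ▸ hu.monotoneOn).intervalIntegrable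
  have h := intervalIntegral_pos_of_pos_on (intervalIntegrable_const.sub hint)
    (fun x hx => sub_pos.2 (hu (Ioo_subset_Icc_self hx) (right_mem_Icc.2 hab.le) hx.2)) hab
  rw [integral_sub intervalIntegrable_const hint, intervalIntegral.integral_const, smul_eq_mul] at h
  linarith

theorem IntervalIntegrable.monotoneOn_mul (hφ : IntervalIntegrable φ volume a b)
    (hu : MonotoneOn u (uIcc a b)) : IntervalIntegrable (fun x => u x * φ x) volume a b := by
  rw [intervalIntegrable_iff] at hφ ⊢
  refine hφ.bdd_mul (c := max |u (min a b)| |u (max a b)|)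
    (intervalIntegrable_iff.1 hu.intervalIntegrable).aestronglyMeasurable
    ((ae_restrict_iff' measurableSet_uIoc).2 (ae_of_all _ fun x hx => ?_))
  have hx' : x ∈ uIcc a b := uIoc_subset_uIcc hx
  exact abs_le_max_abs_abs (hu ⟨le_rfl, inf_le_sup⟩ hx' hx'.1) (hu hx' ⟨inf_le_sup, le_rfl⟩ hx'.2)

theorem MeasureTheory.LocallyIntegrable.absolutelyContinuousOnInterval_primitive
    (hφ : LocallyIntegrable φ) (c a b : ℝ) :
    AbsolutelyContinuousOnInterval (fun x => ∫ t in c..x, φ t) a b := by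
  have h := (hφ.intervalIntegrable (min c (min a b)) (max c (max a b))
    ).absolutelyContinuousOnInterval_intervalIntegral (c := c) (by simp)
  exact h.mono (uIcc_subset_uIcc (by simp) (by simp))

theorem MeasureTheory.LocallyIntegrable.integral_mul_eq_sub_integral_deriv_mul
    (hu : AbsolutelyContinuousOnInterval u a b) (hφ : LocallyIntegrable φ) (c : ℝ) :
    ∫ x in a..b, u x * φ x = u b * (∫ t in c..b, φ t) - u a * (∫ t in c..a, φ t) -
      ∫ x in a..b, deriv u x * ∫ t in c..x, φ t := by
  rw [← hu.integral_mul_deriv_eq_deriv_mul (hφ.absolutelyContinuousOnInterval_primitive c a b)]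
  refine intervalIntegral.integral_congr_ae ?_
  filter_upwards [LocallyIntegrable.ae_hasDerivAt_integral hφ] with x hx _
  rw [(hx c).deriv]

end Primitive

theorem IsGreatest.pos_and_exists_mem_Ico {h : ℝ → ℝ} {π q : ℝ}
    (hπ : IsGreatest (h '' Icc 0 1) π) (h1 : h 1 = 0) (hq : q ∈ Icc (0:ℝ) 1) (hq0 : 0 < h q) :
    0 < π ∧ ∃ p ∈ Ico (0:ℝ) 1, h p = π := by
  have hπ0 : 0 < π := hq0.trans_le (hπ.2 (mem_image_of_mem h hq))
  obtain ⟨p, hp, rfl⟩ := hπ.1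
  refine ⟨hπ0, p, ⟨hp.1, lt_of_le_of_ne hp.2 ?_⟩, rfl⟩
  rintro rfl
  exact hπ0.ne' h1

/-- `g` is only assumed integrable on `[0, 1]`, so `cdf g` is uncontrolled beyond `1`; cutting `g`
off outside `(0, 1]` makes the primitive continuous and monotone on all of `ℝ`. -/
noncomputable def cdfExt (g : ℝ → ℝ) (x : ℝ) : ℝ := ∫ t in 0..x, (Ioc 0 1).indicator g t

noncomputable def calGExt (g : ℝ → ℝ) (x : ℝ) : ℝ := ∫ t in 0..x, cdfExt g t

theorem setIntegral_Ioc_zero_eq_intervalIntegral {h : ℝ → ℝ} (hh : ∀ t ≤ 0, h t = 0) (x : ℝ) :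
    ∫ t in Ioc 0 x, h t = ∫ t in 0..x, h t := by
  rcases le_total 0 x with hx | hx
  · rw [integral_of_le hx]
  · rw [Ioc_eq_empty (not_lt.2 hx), setIntegral_empty, integral_of_ge hx,
      setIntegral_eq_zero_of_forall_eq_zero fun t ht => hh t ht.2, neg_zero]

section Extension

variable {g : ℝ → ℝ} {a b x : ℝ}

theorem cdf_eq_cdfExt (hx : x ≤ 1) : cdf g x = cdfExt g x := by
  rw [cdfExt, ← setIntegral_Ioc_zero_eq_intervalIntegral
    fun t ht => indicator_of_notMem (fun h => (not_lt.2 ht) h.1) g, cdf]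
  exact setIntegral_congr_fun measurableSet_Ioc fun t ht =>
    (indicator_of_mem (show t ∈ Ioc (0:ℝ) 1 from ⟨ht.1, ht.2.trans hx⟩) g).symm

theorem cdfExt_of_nonpos (hx : x ≤ 0) : cdfExt g x = 0 := by
  rw [← cdf_eq_cdfExt (hx.trans zero_le_one), cdf, Ioc_eq_empty (not_lt.2 hx), setIntegral_empty]

theorem calG_eq_calGExt (hx : x ≤ 1) : calG g x = calGExt g x := by
  rw [calGExt, ← setIntegral_Ioc_zero_eq_intervalIntegral fun t ht => cdfExt_of_nonpos ht, calG]
  exact setIntegral_congr_fun measurableSet_Ioc fun t ht => cdf_eq_cdfExt (ht.2.trans hx)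

theorem calGExt_of_nonpos (hx : x ≤ 0) : calGExt g x = 0 := by
  rw [← calG_eq_calGExt (hx.trans zero_le_one), calG, Ioc_eq_empty (not_lt.2 hx), setIntegral_empty]

variable (hg : IntegrableOn g (Icc 0 1))
include hg

theorem integrable_indicator_Ioc : Integrable ((Ioc 0 1).indicator g) :=
  (integrable_indicator_iff measurableSet_Ioc).2 (hg.mono_set Ioc_subset_Icc_self)

theorem continuous_cdfExt : Continuous (cdfExt g) :=
  (integrable_indicator_Ioc hg).continuous_primitive 0

theorem hasDerivAt_calGExt (x : ℝ) : HasDerivAt (calGExt g) (cdfExt g x) x :=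
  ((continuous_cdfExt hg).integral_hasStrictDerivAt 0 x).hasDerivAt

theorem continuous_calGExt : Continuous (calGExt g) :=
  continuous_iff_continuousAt.2 fun x => (hasDerivAt_calGExt hg x).continuousAt

theorem calGExt_sub_calGExt (a b : ℝ) : calGExt g b - calGExt g a = ∫ t in a..b, cdfExt g t :=
  integral_interval_sub_left ((continuous_cdfExt hg).intervalIntegrable _ _)
    ((continuous_cdfExt hg).intervalIntegrable _ _)

theorem calGExt_one : calGExt g 1 = cdfExt g 1 - muG g := by
  have hibp :=
    (integrable_indicator_Ioc hg).locallyIntegrable.integral_mul_eq_sub_integral_deriv_mul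
    (LipschitzWith.id.lipschitzOnWith.absolutelyContinuousOnInterval (a := 0) (b := 1)) 0
  have hμ : ∫ x in (0:ℝ)..1, id x * (Ioc 0 1).indicator g x = muG g := by
    rw [integral_of_le zero_le_one, muG]
    exact setIntegral_congr_fun measurableSet_Ioc fun t ht => by simp [indicator_of_mem ht]
  simp only [deriv_id, one_mul, id, zero_mul, sub_zero] at hibp hμ
  unfold calGExt cdfExt
  linarith

variable (hg_pos : ∀ᵐ t, t ∈ Icc (0:ℝ) 1 → 0 < g t)
include hg_pos

theorem monotone_cdfExt : Monotone (cdfExt g) := by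
  refine monotone_primitive (integrable_indicator_Ioc hg).locallyIntegrable ?_ 0
  filter_upwards [hg_pos] with t ht
  by_cases h : t ∈ Ioc 0 1
  · exact (indicator_of_mem h g).symm ▸ (ht (Ioc_subset_Icc_self h)).le
  · exact (indicator_of_notMem h g).symm ▸ le_rfl

theorem strictMonoOn_cdfExt : StrictMonoOn (cdfExt g) (Icc 0 1) := by
  refine strictMonoOn_primitive (integrable_indicator_Ioc hg).locallyIntegrable ?_ 0
  filter_upwards [hg_pos] with t ht h
  exact (indicator_of_mem h g).symm ▸ ht (Ioc_subset_Icc_self h)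

theorem cdfExt_nonneg (x : ℝ) : 0 ≤ cdfExt g x := by
  rcases le_total x 0 with hx | hx
  · exact (cdfExt_of_nonpos hx).ge
  · exact (cdfExt_of_nonpos le_rfl).symm.trans_le (monotone_cdfExt hg hg_pos hx)

theorem monotone_calGExt : Monotone (calGExt g) :=
  monotone_primitive (continuous_cdfExt hg).locallyIntegrable
    (ae_of_all _ (cdfExt_nonneg hg hg_pos)) 0

theorem calGExt_nonneg (x : ℝ) : 0 ≤ calGExt g x := by
  rcases le_total x 0 with hx | hx
  · exact (calGExt_of_nonpos hx).ge
  · exact (calGExt_of_nonpos le_rfl).symm.trans_le (monotone_calGExt hg hg_pos hx)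

theorem calGExt_pos (hx0 : 0 < x) (hx1 : x ≤ 1) : 0 < calGExt g x := by
  refine intervalIntegral_pos_of_pos_on ((continuous_cdfExt hg).intervalIntegrable _ _)
    (fun t ht => ?_) hx0
  rw [← cdfExt_of_nonpos (g := g) le_rfl]
  exact strictMonoOn_cdfExt hg hg_pos ⟨le_rfl, zero_le_one⟩ ⟨ht.1.le, ht.2.le.trans hx1⟩ ht.1

theorem calGExt_sub_calGExt_le (hab : a ≤ b) :
    calGExt g b - calGExt g a ≤ cdfExt g b * (b - a) := by
  rw [calGExt_sub_calGExt hg]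
  exact integral_le_mul_sub_of_monotoneOn hab ((monotone_cdfExt hg hg_pos).monotoneOn _)

theorem calGExt_sub_calGExt_lt (ha : 0 ≤ a) (hab : a < b) (hb : b ≤ 1) :
    calGExt g b - calGExt g a < cdfExt g b * (b - a) := by
  rw [calGExt_sub_calGExt hg]
  exact integral_lt_mul_sub_of_strictMonoOn hab
    ((strictMonoOn_cdfExt hg hg_pos).mono (Icc_subset_Icc ha hb))

end Extension

section Profits

variable {f g : ℝ → ℝ} {p x θs : ℝ}

theorem cdf_le_one (hf : IntegrableOn f (Icc 0 1)) (hf_pos : ∀ᵐ t, t ∈ Icc (0:ℝ) 1 → 0 < f t)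
    (hF1 : cdf f 1 = 1) (hx : x ≤ 1) : cdf f x ≤ 1 := by
  have h := monotone_cdfExt hf hf_pos hx
  rwa [← cdf_eq_cdfExt le_rfl, hF1, ← cdf_eq_cdfExt hx] at h

theorem cdf_lt_one (hf : IntegrableOn f (Icc 0 1)) (hf_pos : ∀ᵐ t, t ∈ Icc (0:ℝ) 1 → 0 < f t)
    (hF1 : cdf f 1 = 1) (hx : x ∈ Ico (0:ℝ) 1) : cdf f x < 1 := by
  have h := strictMonoOn_cdfExt hf hf_pos ⟨hx.1, hx.2.le⟩ ⟨zero_le_one, le_rfl⟩ hx.2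
  rwa [← cdf_eq_cdfExt le_rfl, hF1, ← cdf_eq_cdfExt hx.2.le] at h

theorem one_sub_cdf_eq_mul_sub_psi (h : f x ≠ 0) : 1 - cdf f x = f x * (x - psi f x) := by
  rw [psi]
  field_simp
  ring

theorem psi_le_self (hfx : 0 ≤ f x) (hF : cdf f x ≤ 1) : psi f x ≤ x :=
  sub_le_self _ (div_nonneg (sub_nonneg.2 hF) hfx)

theorem psi_lt_self (hfx : 0 < f x) (hF : cdf f x < 1) : psi f x < x :=
  sub_lt_self _ (div_pos (sub_pos.2 hF) hfx)

theorem psi_one (hF1 : cdf f 1 = 1) : psi f 1 = 1 := by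
  simp [psi, hF1]

theorem integral_calGExt_mul_sub_eq (hf : IntegrableOn f (Icc 0 1)) (hg : IntegrableOn g (Icc 0 1))
    (hF1 : cdfExt f 1 = 1) (hp : p ∈ Icc (0:ℝ) 1) :
    ∫ x in p..1, (calGExt g x * f x - cdfExt g x * (1 - cdfExt f x)) =
      calGExt g p * (1 - cdfExt f p) := by
  have hibp :=
    (integrable_indicator_Ioc hf).locallyIntegrable.integral_mul_eq_sub_integral_deriv_mul
    ((continuous_cdfExt hg).locallyIntegrable.absolutelyContinuousOnInterval_primitive 0 p 1) 0
  change ∫ x in p..1, calGExt g x * _ = calGExt g 1 * cdfExt f 1 - calGExt g p * cdfExt f p -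
    ∫ x in p..1, deriv (calGExt g) x * cdfExt f x at hibp
  simp only [fun x => (hasDerivAt_calGExt hg x).deriv] at hibp
  have hindicator : ∫ x in p..1, calGExt g x * (Ioc 0 1).indicator f x =
      ∫ x in p..1, calGExt g x * f x := by
    refine intervalIntegral.integral_congr_ae (ae_of_all _ fun x hx => ?_)
    rw [uIoc_of_le hp.2] at hx
    rw [indicator_of_mem (show x ∈ Ioc (0:ℝ) 1 from ⟨hp.1.trans_lt hx.1, hx.2⟩)]
  have hf' : IntervalIntegrable f volume p 1 :=
    (hf.mono_set (uIcc_of_le hp.2 ▸ Icc_subset_Icc hp.1 le_rfl)).intervalIntegrable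
  have hGf := hf'.continuousOn_mul (continuous_calGExt hg).continuousOn
  have hFF : IntervalIntegrable (fun x => cdfExt g x * cdfExt f x) volume p 1 :=
    ((continuous_cdfExt hg).mul (continuous_cdfExt hf)).intervalIntegrable p 1
  have hrw : ∀ x, calGExt g x * f x - cdfExt g x * (1 - cdfExt f x) =
      calGExt g x * f x + cdfExt g x * cdfExt f x - cdfExt g x := fun x => by ring
  simp only [hrw]
  rw [integral_sub (hGf.add hFF) ((continuous_cdfExt hg).intervalIntegrable p 1),
    integral_add hGf hFF, ← calGExt_sub_calGExt hg, ← hindicator, hibp, hF1]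
  ring

theorem calGExt_mul_sub_le (hg : IntegrableOn g (Icc 0 1))
    (hg_pos : ∀ᵐ t, t ∈ Icc (0:ℝ) 1 → 0 < g t) (hx : x ≤ 1) (hfx : 0 < f x)
    (hψx : psi f x ≤ x) :
    calGExt g x * f x - cdfExt g x * (1 - cdfExt f x) ≤ calGExt g (psi f x) * f x := by
  rw [← cdf_eq_cdfExt (g := f) hx, one_sub_cdf_eq_mul_sub_psi hfx.ne']
  nlinarith [mul_le_mul_of_nonneg_right (calGExt_sub_calGExt_le hg hg_pos hψx) hfx.le]

theorem calGExt_mul_sub_lt (hg : IntegrableOn g (Icc 0 1))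
    (hg_pos : ∀ᵐ t, t ∈ Icc (0:ℝ) 1 → 0 < g t) (hx : x ≤ 1) (hfx : 0 < f x)
    (hψ0 : 0 ≤ psi f x) (hψx : psi f x < x) :
    calGExt g x * f x - cdfExt g x * (1 - cdfExt f x) < calGExt g (psi f x) * f x := by
  rw [← cdf_eq_cdfExt (g := f) hx, one_sub_cdf_eq_mul_sub_psi hfx.ne']
  nlinarith [mul_lt_mul_of_pos_right (calGExt_sub_calGExt_lt hg hg_pos hψ0 hψx hx) hfx]

variable (hf : IntegrableOn f (Icc 0 1)) (hg : IntegrableOn g (Icc 0 1))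
  (hg_pos : ∀ᵐ t, t ∈ Icc (0:ℝ) 1 → 0 < g t) (hf_pos : ∀ t ∈ Icc (0:ℝ) 1, 0 < f t)
  (hF1 : cdf f 1 = 1) (hψ : StrictMonoOn (psi f) (Icc 0 1))
  (hθs : θs ∈ Ioo (0:ℝ) 1) (hθs0 : psi f θs = 0)
include hf hg hg_pos hf_pos hF1 hψ hθs hθs0

theorem exAnteProfit_lt_integral_calGExt_psi_mul (hp : p ∈ Ico (0:ℝ) 1) :
    (1 - cdf f p) * calG g p < ∫ x in p..1, calGExt g (psi f x) * f x := by
  have hpI : p ∈ Icc (0:ℝ) 1 := Ico_subset_Icc_self hp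
  have hf_ae : ∀ᵐ t, t ∈ Icc (0:ℝ) 1 → 0 < f t := ae_of_all _ hf_pos
  have hsub : uIcc p 1 ⊆ Icc 0 1 := uIcc_of_le hpI.2 ▸ Icc_subset_Icc hpI.1 le_rfl
  have hf' : IntervalIntegrable f volume p 1 := (hf.mono_set hsub).intervalIntegrable
  rw [cdf_eq_cdfExt hp.2.le, calG_eq_calGExt hp.2.le, mul_comm,
    ← integral_calGExt_mul_sub_eq hf hg (cdf_eq_cdfExt le_rfl ▸ hF1) hpI]
  refine integral_lt_integral_of_le_of_lt_on_Ioo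
    ((hf'.continuousOn_mul (continuous_calGExt hg).continuousOn).sub
      (((continuous_cdfExt hg).mul (continuous_const.sub (continuous_cdfExt hf))).intervalIntegrable
        p 1))
    (hf'.monotoneOn_mul ((monotone_calGExt hg hg_pos).comp_monotoneOn (hψ.monotoneOn.mono hsub)))
    (fun x hx => ?_) (le_max_left p θs) (max_lt hp.2 hθs.2) le_rfl (fun x hx => ?_)
  · have hxI : x ∈ Icc (0:ℝ) 1 := ⟨hpI.1.trans hx.1.le, hx.2⟩
    exact calGExt_mul_sub_le hg hg_pos hx.2 (hf_pos x hxI)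
      (psi_le_self (hf_pos x hxI).le (cdf_le_one hf hf_ae hF1 hx.2))
  · have hxI : x ∈ Icc (0:ℝ) 1 := ⟨hpI.1.trans (le_max_left p θs |>.trans hx.1.le), hx.2.le⟩
    have hψ0 : 0 < psi f x :=
      hθs0 ▸ hψ (Ioo_subset_Icc_self hθs) hxI ((le_max_right p θs).trans_lt hx.1)
    exact calGExt_mul_sub_lt hg hg_pos hx.2.le (hf_pos x hxI) hψ0.le
      (psi_lt_self (hf_pos x hxI) (cdf_lt_one hf hf_ae hF1 ⟨hxI.1, hx.2⟩))

theorem integral_calGExt_psi_mul_le (hp : p ∈ Icc (0:ℝ) 1) :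
    ∫ x in p..1, calGExt g (psi f x) * f x ≤ ∫ θ in θs..1, calG g (psi f θ) * f θ := by
  have hθsI : θs ∈ Icc (0:ℝ) 1 := Ioo_subset_Icc_self hθs
  have hθsU : θs ∈ uIcc (0:ℝ) 1 := Icc_subset_uIcc hθsI
  have hint : IntervalIntegrable (fun x => calGExt g (psi f x) * f x) volume 0 1 :=
    (IntegrableOn.intervalIntegrable (by rwa [uIcc_of_le (zero_le_one' ℝ)])).monotoneOn_mul
      ((monotone_calGExt hg hg_pos).comp_monotoneOn
        (uIcc_of_le (zero_le_one' ℝ) ▸ hψ.monotoneOn))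
  have hvanish : ∫ x in (0:ℝ)..θs, calGExt g (psi f x) * f x = 0 := by
    refine (integral_congr (g := fun _ => 0) fun x hx => ?_).trans integral_zero
    rw [uIcc_of_le hθsI.1] at hx
    have hψx : psi f x ≤ 0 := hθs0 ▸ hψ.monotoneOn ⟨hx.1, hx.2.trans hθsI.2⟩ hθsI hx.2
    simp [calGExt_of_nonpos hψx]
  calc ∫ x in p..1, calGExt g (psi f x) * f x ≤ ∫ x in (0:ℝ)..1, calGExt g (psi f x) * f x :=
        integral_mono_interval hp.1 hp.2 le_rfl ((ae_restrict_iff' measurableSet_Ioc).2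
          (ae_of_all _ fun x hx => mul_nonneg (calGExt_nonneg hg hg_pos _)
            (hf_pos x (Ioc_subset_Icc_self hx)).le)) hint
    _ = ∫ x in θs..1, calGExt g (psi f x) * f x := by
        rw [← integral_add_adjacent_intervals (hint.mono_set (uIcc_subset_uIcc_left hθsU))
          (hint.mono_set (uIcc_subset_uIcc_right hθsU)), hvanish, zero_add]
    _ = ∫ θ in θs..1, calG g (psi f θ) * f θ := integral_congr fun x hx => by
        rw [uIcc_of_le hθsI.2] at hx
        have hxI : x ∈ Icc (0:ℝ) 1 := ⟨hθsI.1.trans hx.1, hx.2⟩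
        rw [calG_eq_calGExt (psi_one hF1 ▸ hψ.monotoneOn hxI ⟨zero_le_one, le_rfl⟩ hx.2)]

theorem exAnteProfit_lt_integral (hp : p ∈ Ico (0:ℝ) 1) :
    (1 - cdf f p) * calG g p < ∫ θ in θs..1, calG g (psi f θ) * f θ :=
  (exAnteProfit_lt_integral_calGExt_psi_mul hf hg hg_pos hf_pos hF1 hψ hθs hθs0 hp).trans_le
    (integral_calGExt_psi_mul_le hf hg hg_pos hf_pos hF1 hψ hθs hθs0 (Ico_subset_Icc_self hp))

end Profits

section FixedPrice

variable {g : ℝ → ℝ} (hg : IntegrableOn g (Icc 0 1)) (hg_pos : ∀ᵐ t, t ∈ Icc (0:ℝ) 1 → 0 < g t)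
  (hG1 : cdf g 1 = 1)
include hg hg_pos hG1

theorem sub_muG_lt_calG {p : ℝ} (hp : p ∈ Ico (0:ℝ) 1) : p - muG g < calG g p := by
  have h := calGExt_sub_calGExt_lt hg hg_pos hp.1 hp.2 le_rfl
  rw [calGExt_one hg, ← cdf_eq_cdfExt le_rfl, hG1] at h
  rw [calG_eq_calGExt hp.2.le]
  linarith

theorem muG_pos : 0 < muG g := by
  simpa [calG] using sub_muG_lt_calG hg hg_pos hG1 ⟨le_rfl, zero_lt_one⟩

theorem muG_lt_one : muG g < 1 := by
  have h := calGExt_pos hg hg_pos zero_lt_one le_rfl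
  rw [calGExt_one hg, ← cdf_eq_cdfExt le_rfl, hG1] at h
  linarith

end FixedPrice

theorem stmt2_general
    (f g : ℝ → ℝ)
    (hf_int : IntegrableOn f (Set.Icc 0 1))
    (hg_int : IntegrableOn g (Set.Icc 0 1))
    (hf_ae : ∀ᵐ t, t ∈ Set.Icc (0:ℝ) 1 → 0 < f t)
    (hg_ae : ∀ᵐ t, t ∈ Set.Icc (0:ℝ) 1 → 0 < g t)
    (hf_one : cdf f 1 = 1)
    (hg_one : cdf g 1 = 1)
    (hf_pos : ∀ t ∈ Set.Icc (0:ℝ) 1, 0 < f t)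
    (hpsi_mono : StrictMonoOn (psi f) (Set.Icc 0 1))
    (θs : ℝ) (hθs : θs ∈ Set.Ioo (0:ℝ) 1) (hθs0 : psi f θs = 0)
    (piEAO piEAFP : ℝ)
    (hEAO : IsGreatest ((fun p => (1 - cdf f p) * calG g p) '' Set.Icc (0:ℝ) 1) piEAO)
    (hEAFP : IsGreatest ((fun p => (1 - cdf f p) * (p - muG g)) '' Set.Icc (0:ℝ) 1) piEAFP) :
    0 < piEAFP ∧ piEAFP < piEAO ∧
    piEAO < (∫ θ in θs..1, calG g (psi f θ) * f θ) ∧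
    piEAO / (∫ θ in θs..1, calG g (psi f θ) * f θ) ∈ Set.Ioo (0:ℝ) 1 ∧
    piEAFP / (∫ θ in θs..1, calG g (psi f θ) * f θ) <
      piEAO / (∫ θ in θs..1, calG g (psi f θ) * f θ) ∧
    (∀ δ ∈ Set.Ioo (piEAO / (∫ θ in θs..1, calG g (psi f θ) * f θ)) 1,
      piEAO < δ * (∫ θ in θs..1, calG g (psi f θ) * f θ)) ∧
    (∀ δ ∈ Set.Ioo (0:ℝ) (piEAO / (∫ θ in θs..1, calG g (psi f θ) * f θ)),
      δ * (∫ θ in θs..1, calG g (psi f θ) * f θ) < piEAO) := by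
  have hμ0 := muG_pos hg_int hg_ae hg_one
  have hμ1 := muG_lt_one hg_int hg_ae hg_one
  have hθs_calG : 0 < calG g θs :=
    calG_eq_calGExt hθs.2.le ▸ calGExt_pos hg_int hg_ae hθs.1 hθs.2.le
  obtain ⟨hO_pos, p₀, hp₀, rfl⟩ := hEAO.pos_and_exists_mem_Ico (by simp [hf_one])
    (Ioo_subset_Icc_self hθs)
    (mul_pos (sub_pos.2 (cdf_lt_one hf_int hf_ae hf_one (Ioo_subset_Ico_self hθs))) hθs_calG)
  obtain ⟨hF_pos, p₁, hp₁, rfl⟩ := hEAFP.pos_and_exists_mem_Ico (by simp [hf_one])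
    (q := (1 + muG g) / 2) ⟨by linarith, by linarith⟩ (mul_pos (sub_pos.2 (cdf_lt_one hf_int
      hf_ae hf_one ⟨by linarith, by linarith⟩)) (by linarith))
  have hOA := exAnteProfit_lt_integral hf_int hg_int hg_ae hf_pos hf_one hpsi_mono hθs hθs0 hp₀
  have hFO := (mul_lt_mul_of_pos_left (sub_muG_lt_calG hg_int hg_ae hg_one hp₁)
    (sub_pos.2 (cdf_lt_one hf_int hf_ae hf_one hp₁))).trans_le
      (hEAO.2 (mem_image_of_mem _ (Ico_subset_Icc_self hp₁)))
  have hA := hO_pos.trans hOA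
  exact ⟨hF_pos, hFO, hOA, ⟨div_pos hO_pos hA, (div_lt_one hA).2 hOA⟩,
    div_lt_div_of_pos_right hFO hA, fun δ hδ => (div_lt_iff₀ hA).1 hδ.1,
    fun δ hδ => (lt_div_iff₀ hA).1 hδ.2⟩

/-- with `A = ∫_{θ*}^1 𝒢(ψ(θ)) f(θ) dθ`, `π^EAO` and `π^EAFP` the maximal
ex-ante at-will and ex-ante fixed-price profits, one has `0 < π^EAFP < π^EAO < A`,
`δ̄ = π^EAO/A ∈ (0,1)`, `δ* = π^EAFP/A < δ̄`, and `δ·A ≷ π^EAO` according as `δ ≷ δ̄`. -/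
theorem stmt2
    (f g : ℝ → ℝ)
    (hf_int : IntegrableOn f (Set.Icc 0 1))
    (hg_int : IntegrableOn g (Set.Icc 0 1))
    (hf_ae : ∀ᵐ t, t ∈ Set.Icc (0:ℝ) 1 → 0 < f t)
    (hg_ae : ∀ᵐ t, t ∈ Set.Icc (0:ℝ) 1 → 0 < g t)
    (hf_one : cdf f 1 = 1)
    (hg_one : cdf g 1 = 1)
    (hf_cont : ContinuousOn f (Set.Icc 0 1))
    (hf_pos : ∀ t ∈ Set.Icc (0:ℝ) 1, 0 < f t)
    (hpsi_mono : StrictMonoOn (psi f) (Set.Icc 0 1))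
    (θs : ℝ) (hθs : θs ∈ Set.Ioo (0:ℝ) 1) (hθs0 : psi f θs = 0)
    (piEAO piEAFP : ℝ)
    (hEAO : IsGreatest ((fun p => (1 - cdf f p) * calG g p) '' Set.Icc (0:ℝ) 1) piEAO)
    (hEAFP : IsGreatest ((fun p => (1 - cdf f p) * (p - muG g)) '' Set.Icc (0:ℝ) 1) piEAFP) :
    0 < piEAFP ∧ piEAFP < piEAO ∧
    piEAO < (∫ θ in θs..1, calG g (psi f θ) * f θ) ∧
    piEAO / (∫ θ in θs..1, calG g (psi f θ) * f θ) ∈ Set.Ioo (0:ℝ) 1 ∧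
    piEAFP / (∫ θ in θs..1, calG g (psi f θ) * f θ) <
      piEAO / (∫ θ in θs..1, calG g (psi f θ) * f θ) ∧
    (∀ δ ∈ Set.Ioo (piEAO / (∫ θ in θs..1, calG g (psi f θ) * f θ)) 1,
      piEAO < δ * (∫ θ in θs..1, calG g (psi f θ) * f θ)) ∧
    (∀ δ ∈ Set.Ioo (0:ℝ) (piEAO / (∫ θ in θs..1, calG g (psi f θ) * f θ)),
      δ * (∫ θ in θs..1, calG g (psi f θ) * f θ) < piEAO) :=
  stmt2_general f g hf_int hg_int hf_ae hg_ae hf_one hg_one hf_pos hpsi_mono θs hθs hθs0 piEAO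
    piEAFP hEAO hEAFP
end
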